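/- Let H₁ and H₂ be finite-dimensional complex Hilbert spaces and let ψ ∈ H₁ ⊗ H₂ be a unit vector. Then there exist a family of non-negative real numbers {pᵢ} with Σᵢ pᵢ = 1 and orthonormal families {aᵢ} in H₁ and {bᵢ} in H₂ such that ψ = Σᵢ √pᵢ · aᵢ ⊗ bᵢ (Schmidt decomposition). -/

import Mathlib

open Matrix
open scoped Kronecker ComplexOrder

/-- The matrix square root of a positive semidefinite matrix, as `Matrix.PosSemidef.sqrt`
was defined in the older Mathlib (it has since been removed). -/
noncomputable def Matrix.PosSemidef.sqrt {n : Type*} [Fintype n] [DecidableEq n] {A : Matrix n n ℂ}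
    (hA : A.PosSemidef) : Matrix n n ℂ :=
  hA.1.eigenvectorUnitary.1 * diagonal ((↑) ∘ (Real.sqrt ∘ hA.1.eigenvalues)) *
    (star hA.1.eigenvectorUnitary : Matrix n n ℂ)

noncomputable def traceNorm {n : Type*} [Fintype n] [DecidableEq n] (A : Matrix n n ℂ) : ℝ :=
  ((Matrix.posSemidef_conjTranspose_mul_self A).sqrt).trace.re

noncomputable def gammaNorm {m n : Type*} [Fintype m] [DecidableEq m] [Fintype n] [DecidableEq n]
    (t : Matrix (m × n) (m × n) ℂ) : ℝ :=
  sInf { c : ℝ | ∃ (r : ℕ) (u : Fin r → Matrix m m ℂ) (v : Fin r → Matrix n n ℂ),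
    t = ∑ i, (u i) ⊗ₖ (v i) ∧ c = ∑ i, traceNorm (u i) * traceNorm (v i) }

def IsDensity {n : Type*} [Fintype n] (ρ : Matrix n n ℂ) : Prop :=
  ρ.PosSemidef ∧ ρ.trace = 1

def evec {ι : Type*} (ψ : EuclideanSpace ℂ ι) : ι → ℂ := ψ

noncomputable def tensorVec {ι κ : Type*} (a : EuclideanSpace ℂ ι) (b : EuclideanSpace ℂ κ) :
    EuclideanSpace ℂ (ι × κ) :=
  (WithLp.equiv 2 _).symm (fun p => evec a p.1 * evec b p.2)

noncomputable def projOnto {ι : Type*} (ψ : EuclideanSpace ℂ ι) : Matrix ι ι ℂ :=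
  Matrix.vecMulVec (evec ψ) (star (evec ψ))

/-!
Let `M` be the coefficient matrix of `ψ` and `vᵢ` an orthonormal eigenbasis of `Mᴴ M`. Completeness
of `(vᵢ)` gives `ψ = ∑ᵢ M vᵢ ⊗ v̄ᵢ`, the conjugates `v̄ᵢ` are again orthonormal, and the vectors
`M vᵢ` are pairwise orthogonal because `⟪M vᵢ, M vⱼ⟫ = λⱼ ⟪vᵢ, vⱼ⟫`. Dropping the terms with
`M vᵢ = 0` and normalising the others gives the decomposition with `pᵢ = ‖M vᵢ‖²`, and these sum to
`‖ψ‖² = 1` since the `v̄ᵢ` are orthonormal.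
-/

open scoped InnerProductSpace

theorem orthonormal_inv_norm_smul_of_pairwise_inner_eq_zero {𝕜 E ι : Type*} [RCLike 𝕜]
    [NormedAddCommGroup E] [InnerProductSpace 𝕜 E] {w : ι → E}
    (hw : Pairwise fun i j => ⟪w i, w j⟫_𝕜 = 0) :
    Orthonormal 𝕜 fun i : {i // w i ≠ 0} => ((‖w i‖⁻¹ : ℝ) : 𝕜) • w i := by
  refine ⟨fun i => ?_, fun i j hij => ?_⟩
  · simp [norm_smul, i.2]
  · simp only [inner_smul_left, inner_smul_right, hw (Subtype.coe_injective.ne hij), mul_zero]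

theorem Fintype.sum_equivFin_subtype_of_ne_zero {ι M : Type*} [Fintype ι] [AddCommMonoid M]
    (P : ι → Prop) [DecidablePred P] {f : ι → M} (hf : ∀ i, f i ≠ 0 → P i) :
    ∑ j, f ((Fintype.equivFin {i // P i}).symm j) = ∑ i, f i := by
  rw [Equiv.sum_comp (Fintype.equivFin {i // P i}).symm (fun i => f i),
    ← Finset.sum_subtype _ (fun _ => Finset.mem_filter_univ _)]
  exact Finset.sum_filter_of_ne fun i _ => hf i

namespace Matrix

variable {𝕜 ι κ : Type*} [RCLike 𝕜] [Fintype κ] [DecidableEq κ]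

theorem sum_vecMulVec_orthonormalBasis [Fintype ι]
    (v : OrthonormalBasis ι 𝕜 (EuclideanSpace 𝕜 κ)) :
    ∑ i, vecMulVec ⇑(v i) (star ⇑(v i)) = 1 := by
  ext y z
  have h := v.sum_inner_mul_inner (EuclideanSpace.single y 1) (EuclideanSpace.single z 1)
  simp only [EuclideanSpace.inner_single_left, EuclideanSpace.inner_single_right] at h
  simpa [sum_apply, vecMulVec_apply, one_apply, PiLp.single_apply, eq_comm] using h

theorem eq_sum_vecMulVec_mulVec_orthonormalBasis (M : Matrix ι κ 𝕜)
    (v : OrthonormalBasis κ 𝕜 (EuclideanSpace 𝕜 κ)) :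
    M = ∑ i, vecMulVec (M *ᵥ ⇑(v i)) (star ⇑(v i)) := by
  simp_rw [← mul_vecMulVec, ← Matrix.mul_sum, sum_vecMulVec_orthonormalBasis, Matrix.mul_one]

theorem IsHermitian.pairwise_inner_mulVec_eigenvectorBasis_eq_zero [Fintype ι]
    {M : Matrix ι κ 𝕜} (hA : (Mᴴ * M).IsHermitian) :
    Pairwise fun i j => ⟪WithLp.toLp 2 (M *ᵥ ⇑(hA.eigenvectorBasis i)),
      WithLp.toLp 2 (M *ᵥ ⇑(hA.eigenvectorBasis j))⟫_𝕜 = 0 := by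
  intro i j hij
  set v := hA.eigenvectorBasis
  calc ⟪WithLp.toLp 2 (M *ᵥ ⇑(v i)), WithLp.toLp 2 (M *ᵥ ⇑(v j))⟫_𝕜
      = star ⇑(v i) ⬝ᵥ (Mᴴ * M) *ᵥ ⇑(v j) := by
        rw [EuclideanSpace.inner_toLp_toLp, star_mulVec, dotProduct_comm, ← dotProduct_mulVec,
          mulVec_mulVec]
    _ = (hA.eigenvalues j : 𝕜) * ⟪v i, v j⟫_𝕜 := by
        rw [hA.mulVec_eigenvectorBasis, RCLike.real_smul_eq_coe_smul (K := 𝕜), dotProduct_smul,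
          smul_eq_mul, EuclideanSpace.inner_eq_star_dotProduct, dotProduct_comm]
    _ = 0 := by rw [v.orthonormal.inner_eq_zero hij, mul_zero]

end Matrix

theorem EuclideanSpace.orthonormal_toLp_star {𝕜 ι κ : Type*} [RCLike 𝕜] [Fintype κ]
    {v : ι → EuclideanSpace 𝕜 κ} (hv : Orthonormal 𝕜 v) :
    Orthonormal 𝕜 fun i => WithLp.toLp 2 (star ⇑(v i)) := by
  classical
  rw [orthonormal_iff_ite] at hv ⊢
  intro i j
  rw [EuclideanSpace.inner_toLp_toLp, star_star, dotProduct_comm]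
  exact (hv j i).trans (if_congr eq_comm rfl rfl)

section TensorVec

variable {ι κ : Type*}

theorem tensorVec_apply (a : EuclideanSpace ℂ ι) (b : EuclideanSpace ℂ κ) (p : ι × κ) :
    tensorVec a b p = a p.1 * b p.2 := rfl

theorem tensorVec_smul_left (c : ℂ) (a : EuclideanSpace ℂ ι) (b : EuclideanSpace ℂ κ) :
    tensorVec (c • a) b = c • tensorVec a b := by
  ext p
  simp only [tensorVec_apply, PiLp.smul_apply, smul_eq_mul, mul_assoc]

theorem tensorVec_zero_left (b : EuclideanSpace ℂ κ) :
    tensorVec (0 : EuclideanSpace ℂ ι) b = 0 := by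
  ext p
  simp only [tensorVec_apply, PiLp.zero_apply, zero_mul]

theorem inner_tensorVec [Fintype ι] [Fintype κ] (a a' : EuclideanSpace ℂ ι)
    (b b' : EuclideanSpace ℂ κ) :
    ⟪tensorVec a b, tensorVec a' b'⟫_ℂ = ⟪a, a'⟫_ℂ * ⟪b, b'⟫_ℂ := by
  simp only [PiLp.inner_apply, tensorVec_apply, Fintype.sum_prod_type, Finset.sum_mul_sum]
  refine Finset.sum_congr rfl fun x _ => Finset.sum_congr rfl fun y _ => ?_
  simp only [RCLike.inner_apply, map_mul]
  ring

theorem norm_sq_sum_tensorVec [Fintype ι] [Fintype κ] {σ : Type*} [Fintype σ]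
    (w : σ → EuclideanSpace ℂ ι) {b : σ → EuclideanSpace ℂ κ} (hb : Orthonormal ℂ b) :
    ‖∑ i, tensorVec (w i) (b i)‖ ^ 2 = ∑ i, ‖w i‖ ^ 2 := by
  classical
  rw [orthonormal_iff_ite] at hb
  calc ‖∑ i, tensorVec (w i) (b i)‖ ^ 2
      = RCLike.re (∑ j, ∑ i, ⟪w i, w j⟫_ℂ * ⟪b i, b j⟫_ℂ) := by
        rw [@norm_sq_eq_re_inner ℂ]
        simp only [sum_inner, inner_sum, inner_tensorVec]
    _ = ∑ i, RCLike.re ⟪w i, w i⟫_ℂ := by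
        simp only [hb, mul_ite, mul_one, mul_zero, Finset.sum_ite_eq', Finset.mem_univ, if_true,
          map_sum]
    _ = ∑ i, ‖w i‖ ^ 2 := by simp only [← @norm_sq_eq_re_inner ℂ]

def coeffMatrix (ψ : EuclideanSpace ℂ (ι × κ)) : Matrix ι κ ℂ :=
  Matrix.of fun x y => ψ (x, y)

theorem eq_sum_tensorVec_orthonormalBasis [Fintype κ] [DecidableEq κ]
    (ψ : EuclideanSpace ℂ (ι × κ)) (v : OrthonormalBasis κ ℂ (EuclideanSpace ℂ κ)) :
    ψ = ∑ i, tensorVec (WithLp.toLp 2 (coeffMatrix ψ *ᵥ ⇑(v i)))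
      (WithLp.toLp 2 (star ⇑(v i))) := by
  ext p
  have h := congr_fun₂ (Matrix.eq_sum_vecMulVec_mulVec_orthonormalBasis (coeffMatrix ψ) v) p.1 p.2
  simpa [WithLp.ofLp_sum, Finset.sum_apply, tensorVec_apply, Matrix.vecMulVec_apply,
    Matrix.sum_apply, coeffMatrix] using h

theorem exists_schmidt_of_eq_sum_tensorVec [Fintype ι] [Fintype κ] {σ : Type*} [Fintype σ]
    {ψ : EuclideanSpace ℂ (ι × κ)} {w : σ → EuclideanSpace ℂ ι} {u : σ → EuclideanSpace ℂ κ}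
    (hw : Pairwise fun i j => ⟪w i, w j⟫_ℂ = 0) (hu : Orthonormal ℂ u)
    (hψ : ψ = ∑ i, tensorVec (w i) (u i)) :
    ∃ (k : ℕ) (p : Fin k → ℝ) (a : Fin k → EuclideanSpace ℂ ι) (b : Fin k → EuclideanSpace ℂ κ),
      (∀ i, 0 ≤ p i) ∧ (∑ i, p i = ‖ψ‖ ^ 2) ∧ Orthonormal ℂ a ∧ Orthonormal ℂ b ∧
      ψ = ∑ i, Real.sqrt (p i) • tensorVec (a i) (b i) := by
  classical
  set e := (Fintype.equivFin {i // w i ≠ 0}).symm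
  have hterm : ∀ i : {i // w i ≠ 0}, Real.sqrt (‖w i‖ ^ 2) •
      tensorVec (((‖w i‖⁻¹ : ℝ) : ℂ) • w i) (u i) = tensorVec (w i) (u i) := by
    intro i
    rw [Real.sqrt_sq (norm_nonneg _), tensorVec_smul_left, ← Complex.coe_smul, smul_smul,
      ← Complex.ofReal_mul, mul_inv_cancel₀ (norm_ne_zero_iff.mpr i.2), Complex.ofReal_one,
      one_smul]
  refine ⟨_, fun j => ‖w (e j)‖ ^ 2, fun j => ((‖w (e j)‖⁻¹ : ℝ) : ℂ) • w (e j), fun j => u (e j),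
    fun j => sq_nonneg _, ?_, (orthonormal_inv_norm_smul_of_pairwise_inner_eq_zero hw).comp e
    e.injective, hu.comp _ (Subtype.val_injective.comp e.injective), ?_⟩
  · rw [hψ, norm_sq_sum_tensorVec w hu]
    exact Fintype.sum_equivFin_subtype_of_ne_zero (fun i => w i ≠ 0) (f := fun i => ‖w i‖ ^ 2)
      fun i hi => by simpa using hi
  · simp only [hterm]
    rw [hψ]
    exact (Fintype.sum_equivFin_subtype_of_ne_zero (fun i => w i ≠ 0)
      (f := fun i => tensorVec (w i) (u i))
      fun i hi h0 => hi (by rw [h0, tensorVec_zero_left])).symm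

end TensorVec

/-- Schmidt decomposition: every unit vector in the tensor product of two
finite-dimensional complex Hilbert spaces has a Schmidt decomposition. -/
theorem schmidt_decomposition (m n : ℕ) (ψ : EuclideanSpace ℂ (Fin m × Fin n))
    (hψ : ‖ψ‖ = 1) :
    ∃ (k : ℕ) (p : Fin k → ℝ) (a : Fin k → EuclideanSpace ℂ (Fin m))
      (b : Fin k → EuclideanSpace ℂ (Fin n)),
      (∀ i, 0 ≤ p i) ∧ (∑ i, p i = 1) ∧ Orthonormal ℂ a ∧ Orthonormal ℂ b ∧
      ψ = ∑ i, Real.sqrt (p i) • tensorVec (a i) (b i) := by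
  have hA := Matrix.isHermitian_conjTranspose_mul_self (coeffMatrix ψ)
  obtain ⟨k, p, a, b, hp, hsum, ha, hb, hdecomp⟩ := exists_schmidt_of_eq_sum_tensorVec
    hA.pairwise_inner_mulVec_eigenvectorBasis_eq_zero
    (EuclideanSpace.orthonormal_toLp_star hA.eigenvectorBasis.orthonormal)
    (eq_sum_tensorVec_orthonormalBasis ψ hA.eigenvectorBasis)
  exact ⟨k, p, a, b, hp, by rw [hsum, hψ, one_pow], ha, hb, hdecomp⟩
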